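/- Let d ≥ 2 and m ≥ 2d be integers, let n ≥ 1, and set k = d. Let X be a set with dn elements and let X = X₁ ∪ X₂ ∪ … ∪ X_m be an m-coloring of X satisfying condition (★): for every t ∈ {1, …, d−1} and every subset I ⊆ {1, …, m} with |I| = t, Σ_{i∈I} |X_i| ≤ tn. Then there exist two distinct color classes such that the (m−1)-coloring of X obtained by merging them into a single color class still satisfies condition (★); in particular, two color classes of smallest sizes can be merged into a single class of size at most n. -/

import Mathlib

open Finset

section SmallestValues

variable {ι : Type*} [Fintype ι] [DecidableEq ι]

lemma exists_two_smallest (f : ι → ℕ) (hcard : 2 ≤ Fintype.card ι) :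
    ∃ i j, i ≠ j ∧ (∀ l, f i ≤ f l) ∧ ∀ l, l ≠ i → f j ≤ f l := by
  have hne : (univ : Finset ι).Nonempty := univ_nonempty_iff.mpr
    (Fintype.card_pos_iff.mp (by omega))
  obtain ⟨i, -, hi⟩ := exists_min_image univ f hne
  have hne' : (univ.erase i).Nonempty := by
    rw [← card_pos, card_erase_of_mem (mem_univ i), card_univ]
    omega
  obtain ⟨j, hj, hjmin⟩ := exists_min_image _ f hne'
  exact ⟨i, j, (ne_of_mem_erase hj).symm, fun l => hi l (mem_univ l),
    fun l hl => hjmin l (mem_erase.mpr ⟨hl, mem_univ l⟩)⟩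

lemma card_sub_one_mul_add_le_sum (f : ι → ℕ) {i j : ι} (hj : ∀ l, l ≠ i → f j ≤ f l) :
    (Fintype.card ι - 1) * f j + f i ≤ ∑ l, f l := by
  rw [← sum_erase_add univ f (mem_univ i), ← card_univ, ← card_erase_of_mem (mem_univ i),
    ← smul_eq_mul, ← sum_const]
  gcongr with l hl
  exact hj l (ne_of_mem_erase hl)

/-- The other `card ι - 1 ≥ 2d - 1` values are all at least `f j ≥ f i`, so
`d * (f i + f j) ≤ ∑ f = d * n`. -/
lemma two_smallest_add_le {f : ι → ℕ} {d n : ℕ} (hd : 0 < d) (hcard : 2 * d ≤ Fintype.card ι)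
    (hsum : ∑ l, f l = d * n) {i j : ι} (hij : f i ≤ f j) (hj : ∀ l, l ≠ i → f j ≤ f l) :
    f i + f j ≤ n := by
  have hlow := card_sub_one_mul_add_le_sum f hj
  have key : d * (f i + f j) ≤ d * n := calc
    d * (f i + f j) ≤ (2 * d - 1) * f j + f i := by
      obtain ⟨e, rfl⟩ : ∃ e, d = e + 1 := ⟨d - 1, by omega⟩
      rw [show 2 * (e + 1) - 1 = 2 * e + 1 by omega]
      nlinarith
    _ ≤ (Fintype.card ι - 1) * f j + f i := by gcongr
    _ ≤ d * n := hsum ▸ hlow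
  exact Nat.le_of_mul_le_mul_left key hd

end SmallestValues

section SubsetSums

variable {ι : Type*}

lemma sum_le_card_mul_of_card_le {c : ι → ℕ} {d n : ℕ}
    (hstar : ∀ t : ℕ, 1 ≤ t → t ≤ d - 1 → ∀ I : Finset ι, I.card = t → ∑ i ∈ I, c i ≤ t * n)
    {I : Finset ι} (hI : I.card ≤ d - 1) :
    ∑ i ∈ I, c i ≤ I.card * n := by
  rcases I.eq_empty_or_nonempty with rfl | hne
  · simp
  · exact hstar _ (card_pos.mpr hne) hI I rfl

lemma sum_le_card_mul_of_le_off [DecidableEq ι] {c g : ι → ℕ} {d n : ℕ}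
    (hc : ∀ I : Finset ι, I.card ≤ d - 1 → ∑ l ∈ I, c l ≤ I.card * n)
    {i : ι} (hgi : g i ≤ n) (hg : ∀ l, l ≠ i → g l ≤ c l)
    {I : Finset ι} (hI : I.card ≤ d - 1) :
    ∑ l ∈ I, g l ≤ I.card * n := by
  by_cases hiI : i ∈ I
  · have hrest : ∑ l ∈ I.erase i, g l ≤ (I.erase i).card * n := calc
      ∑ l ∈ I.erase i, g l ≤ ∑ l ∈ I.erase i, c l :=
        sum_le_sum fun l hl => hg l (ne_of_mem_erase hl)
      _ ≤ (I.erase i).card * n := hc _ ((card_erase_le).trans hI)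
    rw [← sum_erase_add I g hiI, ← card_erase_add_one hiI, add_one_mul]
    omega
  · calc ∑ l ∈ I, g l ≤ ∑ l ∈ I, c l :=
        sum_le_sum fun l hl => hg l fun h => hiI (h ▸ hl)
      _ ≤ I.card * n := hc I hI

end SubsetSums

theorem merging_colors_k_eq_d_general
    {α : Type*} [DecidableEq α] (d m n : ℕ)
    (hd : 2 ≤ d) (hm : 2 * d ≤ m)
    (X : Finset α) (C : Fin m → Finset α)
    (hdisj : ∀ i j : Fin m, i ≠ j → Disjoint (C i) (C j))
    (hunion : Finset.univ.biUnion C = X)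
    (hcard : X.card = d * n)
    (hstar : ∀ t : ℕ, 1 ≤ t → t ≤ d - 1 → ∀ I : Finset (Fin m), I.card = t →
        ∑ i ∈ I, (C i).card ≤ t * n) :
    ∃ i j : Fin m, i ≠ j ∧
      -- `i` and `j` can be chosen as two color classes of smallest sizes
      (∀ l : Fin m, l ≠ i → l ≠ j → (C i).card ≤ (C l).card ∧ (C j).card ≤ (C l).card) ∧
      -- the merged class has size at most n
      (C i ∪ C j).card ≤ n ∧
      -- the (m-1)-coloring obtained by merging classes `i` and `j` (indexed by
      -- `Fin m` with the index `j` removed, where class `i` becomes `C i ∪ C j`)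
      -- still satisfies condition (★)
      (∀ t : ℕ, 1 ≤ t → t ≤ d - 1 → ∀ I : Finset (Fin m), j ∉ I → I.card = t →
        ∑ l ∈ I, (if l = i then (C i ∪ C j).card else (C l).card) ≤ t * n) := by
  have hsum : ∑ l, (C l).card = d * n := by
    rw [← hcard, ← hunion, card_biUnion fun a _ b _ hab => hdisj a b hab]
  obtain ⟨i, j, hij, hi, hj⟩ := exists_two_smallest (fun l => (C l).card)
    (by rw [Fintype.card_fin]; omega)
  have hmerged : (C i ∪ C j).card ≤ n := by
    rw [card_union_of_disjoint (hdisj i j hij)]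
    exact two_smallest_add_le (by omega) (by rwa [Fintype.card_fin]) hsum (hi j) hj
  refine ⟨i, j, hij, fun l hli _ => ⟨hi l, hj l hli⟩, hmerged, ?_⟩
  rintro t - htd I - rfl
  refine sum_le_card_mul_of_le_off (fun I hI => sum_le_card_mul_of_card_le hstar hI)
    (i := i) (by simpa using hmerged) (fun l hl => ?_) htd
  simp [hl]

theorem merging_colors_k_eq_d
    {α : Type*} [DecidableEq α] (d m n : ℕ)
    (hd : 2 ≤ d) (hm : 2 * d ≤ m) (hn : 1 ≤ n)
    (X : Finset α) (C : Fin m → Finset α)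
    (hdisj : ∀ i j : Fin m, i ≠ j → Disjoint (C i) (C j))
    (hunion : Finset.univ.biUnion C = X)
    (hcard : X.card = d * n)
    (hstar : ∀ t : ℕ, 1 ≤ t → t ≤ d - 1 → ∀ I : Finset (Fin m), I.card = t →
        ∑ i ∈ I, (C i).card ≤ t * n) :
    ∃ i j : Fin m, i ≠ j ∧
      -- `i` and `j` can be chosen as two color classes of smallest sizes
      (∀ l : Fin m, l ≠ i → l ≠ j → (C i).card ≤ (C l).card ∧ (C j).card ≤ (C l).card) ∧
      -- the merged class has size at most n
      (C i ∪ C j).card ≤ n ∧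
      -- the (m-1)-coloring obtained by merging classes `i` and `j` (indexed by
      -- `Fin m` with the index `j` removed, where class `i` becomes `C i ∪ C j`)
      -- still satisfies condition (★)
      (∀ t : ℕ, 1 ≤ t → t ≤ d - 1 → ∀ I : Finset (Fin m), j ∉ I → I.card = t →
        ∑ l ∈ I, (if l = i then (C i ∪ C j).card else (C l).card) ≤ t * n) :=
  merging_colors_k_eq_d_general d m n hd hm X C hdisj hunion hcard hstar
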